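/- Let G be a finite abelian p-group. Then V(Z_p G)^p = V(Z_p G^p), i.e., the subgroup of p-th powers of normalized units of Z_p G coincides with the group of normalized units supported on the subgroup G^p (under the Frobenius identification). Consequently, for each i ≥ 1 the number of cyclic direct factors of order p^i in a decomposition of V(Z_p G) equals |G^{p^{i−1}}| − 2|G^{p^i}| + |G^{p^{i+1}}|. -/

import Mathlib

/-! Over `ZMod p` the `p ^ i`-th power map is the Frobenius `∑ a_g g ↦ ∑ a_g g ^ p ^ i`, so the
`p ^ i`-th powers of normalized units are exactly the augmentation-one elements supported on
`G ^ p ^ i`; every augmentation-one element is a unit, since its `|G|`-th power is its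
augmentation. Counting them gives `|V ^ p ^ i| = p ^ (|G ^ p ^ i| - 1)`. In `∏ⱼ (ℤ/pʲ)^{n_j}` the
`p ^ i`-th powers form a group of order `p ^ ∑ⱼ (j - i)₊ n_j`, and the second difference in `i`
of `∑ⱼ (j - i)₊ n_j` is `n_i`. -/

/-- The augmentation map of a group ring. -/
noncomputable def aug (R G : Type*) [CommRing R] [CommGroup G] :
    MonoidAlgebra R G →ₐ[R] R := MonoidAlgebra.lift R R G 1

/-- The group of normalized units of a group ring. -/
noncomputable def Vgrp (R G : Type*) [CommRing R] [CommGroup G] :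
    Subgroup (MonoidAlgebra R G)ˣ :=
  MonoidHom.ker (Units.map ((aug R G).toRingHom : MonoidAlgebra R G →* R))

open MonoidAlgebra Finset

namespace MonoidAlgebra

instance charP {R M : Type*} [Semiring R] [Monoid M] (p : ℕ) [CharP R p] :
    CharP (MonoidAlgebra R M) p :=
  charP_of_injective_ringHom (f := singleOneRingHom) single_right_injective p

lemma exists_mapDomain_eq {R M N : Type*} [Semiring R] {f : M → N} {x : MonoidAlgebra R N}
    (hx : ↑x.coeff.support ⊆ Set.range f) : ∃ y : MonoidAlgebra R M, mapDomain f y = x := by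
  have hmem : x.coeff ∈ (Finsupp.supported R R Set.univ).map (Finsupp.lmapDomain R R f) := by
    rwa [Finsupp.lmapDomain_supported, Set.image_univ, Finsupp.mem_supported]
  obtain ⟨y, -, hy⟩ := hmem
  exact ⟨ofCoeff y, coeff_injective hy⟩

lemma pow_char_pow_eq_mapDomain {p : ℕ} [Fact p.Prime] {G : Type*} [CommMonoid G] (i : ℕ)
    (x : MonoidAlgebra (ZMod p) G) : x ^ p ^ i = mapDomain (· ^ p ^ i) x := by
  induction x using induction_linear with
  | zero => rw [zero_pow (pow_ne_zero i (Fact.out : p.Prime).ne_zero), mapDomain_zero]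
  | add x y hx hy => rw [add_pow_char_pow, hx, hy, mapDomain_add]
  | single g a => rw [single_pow, ZMod.pow_card_pow, mapDomain_single]

end MonoidAlgebra

lemma AddMonoidHom.card_fiber_mul_card_of_surjective {A B : Type*} [AddGroup A] [AddGroup B]
    {f : A →+ B} (hf : Function.Surjective f) (b : B) :
    Nat.card (f ⁻¹' {b}) * Nat.card B = Nat.card A := by
  rw [Nat.card_congr (f.fiberEquivKerOfSurjective hf b), ← f.ker.card_mul_index,
    AddSubgroup.index_ker, f.range_eq_top.mpr hf, AddSubgroup.card_top]

section Augmentation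

variable {R G : Type*} [CommRing R] [CommGroup G]

lemma aug_single (g : G) (r : R) : aug R G (single g r) = r := by
  simp [aug, lift_single]

lemma mem_Vgrp_iff {u : (MonoidAlgebra R G)ˣ} : u ∈ Vgrp R G ↔ aug R G u = 1 := by
  rw [Vgrp, MonoidHom.mem_ker, Units.ext_iff]
  simp

lemma card_aug_eq_one_of_mem_supported [Finite R] {H : Set G} [Finite H] (hH : H.Nonempty) :
    Nat.card {x : MonoidAlgebra R G // x ∈ supported R R H ∧ aug R G x = 1} =
      Nat.card R ^ (Nat.card H - 1) := by
  have := hH.to_subtype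
  let φ : supported R R H →+ R :=
    ((aug R G).toLinearMap.comp (supported R R H).subtype).toAddMonoidHom
  have hφ : Function.Surjective φ := fun r => by
    obtain ⟨h, hh⟩ := hH
    exact ⟨⟨single h r, Finsupp.single_mem_supported R r hh⟩, aug_single h r⟩
  have hcard : Nat.card (supported R R H) = Nat.card R ^ Nat.card H := by
    rw [Nat.card_congr ((supportedEquivFinsupp H).toEquiv.trans Finsupp.equivFunOnFinite),
      Nat.card_fun]
  have hfiber := AddMonoidHom.card_fiber_mul_card_of_surjective hφ 1
  rw [hcard, ← pow_sub_one_mul (Nat.card_pos.ne' : Nat.card H ≠ 0)] at hfiber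
  rw [Nat.card_congr (Equiv.subtypeSubtypeEquivSubtypeInter _ _).symm]
  exact Nat.eq_of_mul_eq_mul_right Nat.card_pos hfiber

end Augmentation

section Frobenius

variable {p : ℕ} [Fact p.Prime] {G : Type*} [CommGroup G]

lemma pow_char_pow_eq_algebraMap_aug {n : ℕ} (hG : ∀ g : G, g ^ p ^ n = 1)
    (x : MonoidAlgebra (ZMod p) G) :
    x ^ p ^ n = algebraMap (ZMod p) (MonoidAlgebra (ZMod p) G) (aug (ZMod p) G x) := by
  rw [pow_char_pow_eq_mapDomain]
  induction x using induction_linear with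
  | zero => simp
  | add x y hx hy => rw [mapDomain_add, map_add, map_add, hx, hy]
  | single g a => rw [mapDomain_single, hG, aug_single, coe_algebraMap]; rfl

lemma isUnit_of_aug_eq_one {n : ℕ} (hG : ∀ g : G, g ^ p ^ n = 1) {x : MonoidAlgebra (ZMod p) G}
    (hx : aug (ZMod p) G x = 1) : IsUnit x :=
  IsUnit.of_pow_eq_one (by rw [pow_char_pow_eq_algebraMap_aug hG, hx, map_one])
    (pow_ne_zero n (Fact.out : p.Prime).ne_zero)

lemma exists_aug_eq_one_pow_eq_iff (i : ℕ) (x : MonoidAlgebra (ZMod p) G) :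
    (∃ y, aug (ZMod p) G y = 1 ∧ y ^ p ^ i = x) ↔
      aug (ZMod p) G x = 1 ∧ x ∈ supported (ZMod p) (ZMod p) (Set.range (· ^ p ^ i : G → G)) := by
  classical
  constructor
  · rintro ⟨y, hy, rfl⟩
    refine ⟨by rw [map_pow, hy, one_pow], ?_⟩
    rw [mem_supported, pow_char_pow_eq_mapDomain]
    refine (Finset.coe_subset.mpr Finsupp.mapDomain_support).trans ?_
    rw [Finset.coe_image]
    exact Set.image_subset_range _ _
  · rintro ⟨hx, hsupp⟩
    obtain ⟨y, rfl⟩ := exists_mapDomain_eq (mem_supported.mp hsupp)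
    refine ⟨y, ?_, pow_char_pow_eq_mapDomain i y⟩
    rwa [← pow_char_pow_eq_mapDomain, map_pow, ZMod.pow_card_pow] at hx

lemma exists_mem_Vgrp_eq_pow_iff (i : ℕ) (u : (MonoidAlgebra (ZMod p) G)ˣ) :
    (∃ v ∈ Vgrp (ZMod p) G, u = v ^ p ^ i) ↔
      u ∈ Vgrp (ZMod p) G ∧
        (u : MonoidAlgebra (ZMod p) G) ∈
          supported (ZMod p) (ZMod p) (Set.range (· ^ p ^ i : G → G)) := by
  rw [mem_Vgrp_iff, ← exists_aug_eq_one_pow_eq_iff]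
  constructor
  · rintro ⟨v, hv, rfl⟩
    exact ⟨v, mem_Vgrp_iff.mp hv, rfl⟩
  · rintro ⟨y, hy, hyu⟩
    have hunit : IsUnit y :=
      (isUnit_pow_iff (pow_ne_zero i (Fact.out : p.Prime).ne_zero)).mp (hyu ▸ u.isUnit)
    exact ⟨hunit.unit, mem_Vgrp_iff.mpr hy, Units.ext hyu.symm⟩

lemma coe_image_range_powMonoidHom_Vgrp {n : ℕ} (hG : ∀ g : G, g ^ p ^ n = 1) (i : ℕ) :
    (fun v : Vgrp (ZMod p) G => ((v : (MonoidAlgebra (ZMod p) G)ˣ) : MonoidAlgebra (ZMod p) G)) ''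
        (powMonoidHom (p ^ i) : Vgrp (ZMod p) G →* Vgrp (ZMod p) G).range =
      {x | ∃ y, aug (ZMod p) G y = 1 ∧ y ^ p ^ i = x} := by
  ext x
  constructor
  · rintro ⟨_, ⟨v, rfl⟩, rfl⟩
    exact ⟨(v : (MonoidAlgebra (ZMod p) G)ˣ), mem_Vgrp_iff.mp v.2, rfl⟩
  · rintro ⟨y, hy, rfl⟩
    let v : Vgrp (ZMod p) G := ⟨(isUnit_of_aug_eq_one hG hy).unit, mem_Vgrp_iff.mpr hy⟩
    exact ⟨v ^ p ^ i, ⟨v, rfl⟩, rfl⟩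

lemma card_range_powMonoidHom_Vgrp [Finite G] {n : ℕ} (hG : ∀ g : G, g ^ p ^ n = 1) (i : ℕ) :
    Nat.card (powMonoidHom (p ^ i) : Vgrp (ZMod p) G →* Vgrp (ZMod p) G).range =
      p ^ (Nat.card (powMonoidHom (p ^ i) : G →* G).range - 1) := by
  have hinj : Function.Injective
      fun v : Vgrp (ZMod p) G => ((v : (MonoidAlgebra (ZMod p) G)ˣ) : MonoidAlgebra (ZMod p) G) :=
    Units.val_injective.comp Subtype.val_injective
  rw [← SetLike.coe_sort_coe, ← Nat.card_image_of_injective hinj,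
    coe_image_range_powMonoidHom_Vgrp hG]
  have hset : {x | ∃ y, aug (ZMod p) G y = 1 ∧ y ^ p ^ i = x} =
      {x | x ∈ supported (ZMod p) (ZMod p) (Set.range (· ^ p ^ i : G → G)) ∧
        aug (ZMod p) G x = 1} :=
    Set.ext fun x => (exists_aug_eq_one_pow_eq_iff i x).trans and_comm
  rw [hset]
  exact (card_aug_eq_one_of_mem_supported (R := ZMod p)
      (H := Set.range (· ^ p ^ i : G → G)) ⟨1, 1, one_pow _⟩).trans
    (by rw [Nat.card_zmod]; rfl)

end Frobenius

lemma Subgroup.card_pi_univ {ι : Type*} [Fintype ι] {A : ι → Type*} [∀ i, Group (A i)]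
    (H : ∀ i, Subgroup (A i)) : Nat.card (Subgroup.pi Set.univ H) = ∏ i, Nat.card (H i) :=
  (Nat.card_congr (Equiv.Set.univPi fun i => (H i : Set (A i)))).trans Nat.card_pi

lemma range_powMonoidHom_pi {ι : Type*} {A : ι → Type*} [∀ i, CommGroup (A i)] (n : ℕ) :
    (powMonoidHom n : (∀ i, A i) →* ∀ i, A i).range =
      Subgroup.pi Set.univ fun i => (powMonoidHom n : A i →* A i).range := by
  ext x
  simp only [MonoidHom.mem_range, powMonoidHom_apply, Subgroup.mem_pi, Set.mem_univ,
    forall_const, funext_iff, Pi.pow_apply]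
  exact (Classical.skolem (p := fun i y => y ^ n = x i)).symm

lemma card_range_powMonoidHom_pi {ι : Type*} [Fintype ι] {A : ι → Type*} [∀ i, CommGroup (A i)]
    (n : ℕ) :
    Nat.card (powMonoidHom n : (∀ i, A i) →* ∀ i, A i).range =
      ∏ i, Nat.card (powMonoidHom n : A i →* A i).range := by
  rw [range_powMonoidHom_pi, Subgroup.card_pi_univ]

lemma card_range_powMonoidHom_zmod {p : ℕ} (hp : p.Prime) (j k : ℕ) :
    Nat.card (powMonoidHom (p ^ k) : Multiplicative (ZMod (p ^ j)) →* _).range = p ^ (j - k) := by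
  have : NeZero (p ^ j) := ⟨pow_ne_zero j hp.ne_zero⟩
  rw [IsCyclic.card_powMonoidHom_range, Nat.card_congr Multiplicative.toAdd, Nat.card_zmod]
  rcases le_total j k with hjk | hkj
  · rw [Nat.gcd_eq_left (Nat.pow_dvd_pow p hjk), Nat.div_self (pow_pos hp.pos j),
      Nat.sub_eq_zero_of_le hjk, pow_zero]
  · rw [Nat.gcd_eq_right (Nat.pow_dvd_pow p hkj), Nat.pow_div hkj hp.pos]

lemma MulEquiv.card_range_powMonoidHom {M N : Type*} [CommGroup M] [CommGroup N] (e : M ≃* N)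
    (n : ℕ) :
    Nat.card (powMonoidHom n : M →* M).range = Nat.card (powMonoidHom n : N →* N).range := by
  rw [← e.map_range_powMonoidHom, Subgroup.card_map_of_injective e.injective]

lemma card_range_powMonoidHom_pi_zmod {p : ℕ} (hp : p.Prime) {ι : Type*} [Fintype ι]
    (e m : ι → ℕ) (k : ℕ) :
    Nat.card (powMonoidHom (p ^ k) :
        (∀ j, Fin (m j) → Multiplicative (ZMod (p ^ e j))) →* _).range =
      p ^ ∑ j, (e j - k) * m j := by
  simp only [card_range_powMonoidHom_pi, card_range_powMonoidHom_zmod hp, prod_const, card_univ,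
    Fintype.card_fin, ← pow_mul, prod_pow_eq_pow_sum]

lemma sum_tsub_mul_add_sum_tsub_mul (s : Finset ℕ) (n : ℕ → ℕ) {i : ℕ} (hi : i ∈ s)
    (hi0 : 1 ≤ i) :
    ∑ j ∈ s, (j - (i - 1)) * n j + ∑ j ∈ s, (j - (i + 1)) * n j =
      2 * ∑ j ∈ s, (j - i) * n j + n i := by
  have hterm : ∀ j, (j - (i - 1)) * n j + (j - (i + 1)) * n j =
      2 * ((j - i) * n j) + if i = j then n j else 0 := by
    intro j
    split_ifs with hij
    · subst hij
      simp [Nat.sub_sub_self hi0]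
    · rw [add_zero, ← add_mul, ← mul_assoc]
      congr 1
      omega
  rw [← sum_add_distrib, sum_congr rfl fun j _ => hterm j, sum_add_distrib, ← mul_sum,
    sum_ite_eq, if_pos hi]

/-- `V(Z_p G)^p = V(Z_p G^p)`: the `p`-th powers of normalized units are exactly
the normalized units supported on `G^p`; consequently, in any decomposition of
`V(Z_p G)` into cyclic factors, the number of factors of order `p^i` is
`|G^{p^{i-1}}| - 2|G^{p^i}| + |G^{p^{i+1}}|`. -/
theorem stmt_17 (p : ℕ) (hp : p.Prime)
    (G : Type*) [CommGroup G] [Fintype G] (hG : IsPGroup p G) :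
    (∀ u : (MonoidAlgebra (ZMod p) G)ˣ,
        (∃ v ∈ Vgrp (ZMod p) G, u = v ^ p) ↔
          (u ∈ Vgrp (ZMod p) G ∧
            ∀ g ∈ (u : MonoidAlgebra (ZMod p) G).coeff.support, ∃ h : G, g = h ^ p)) ∧
      (∀ (N : ℕ) (n : ℕ → ℕ),
        Nonempty ((Vgrp (ZMod p) G) ≃*
            ((j : Fin (N + 1)) → Fin (n j) → Multiplicative (ZMod (p ^ (j : ℕ))))) →
          ∀ i : ℕ, 1 ≤ i → i ≤ N →
            n i + 2 * Nat.card ((powMonoidHom (p ^ i) : G →* G).range) =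
              Nat.card ((powMonoidHom (p ^ (i - 1)) : G →* G).range) +
                Nat.card ((powMonoidHom (p ^ (i + 1)) : G →* G).range)) := by
  have := Fact.mk hp
  obtain ⟨m, hm⟩ := IsPGroup.iff_card.mp hG
  have hexp : ∀ g : G, g ^ p ^ m = 1 := fun g => hm ▸ pow_card_eq_one'
  refine ⟨fun u => ?_, fun N n ⟨e⟩ i hi hiN => ?_⟩
  · simpa [mem_supported, Set.subset_def, eq_comm] using exists_mem_Vgrp_eq_pow_iff 1 u
  have hcard : ∀ k, Nat.card (powMonoidHom (p ^ k) : G →* G).range =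
      ∑ j ∈ range (N + 1), (j - k) * n j + 1 := by
    intro k
    have hpow : p ^ (Nat.card (powMonoidHom (p ^ k) : G →* G).range - 1) =
        p ^ ∑ j ∈ range (N + 1), (j - k) * n j := by
      rw [← card_range_powMonoidHom_Vgrp hexp, e.card_range_powMonoidHom,
        card_range_powMonoidHom_pi_zmod hp,
        Fin.sum_univ_eq_sum_range (fun j => (j - k) * n j)]
    have hpos : 0 < Nat.card (powMonoidHom (p ^ k) : G →* G).range := Nat.card_pos
    have hexponent := Nat.pow_right_injective hp.two_le hpow
    omega
  have hsecond := sum_tsub_mul_add_sum_tsub_mul (range (N + 1)) n (mem_range.mpr (by omega)) hi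
  rw [hcard, hcard, hcard]
  omega
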